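/- Let d2, a2, h, q > 0 and 0 ≤ x1 < L. If w is a solution of the upstream toxicant boundary value problem on [x1, L], then w(x) > 0 for all x ∈ [x1, L]. -/
import Mathlib


/-- `w` is a solution of the upstream toxicant boundary value problem with
parameters `d2, a2, h, q` on the interval `[x1, L]`. -/
def IsUpstreamSolution (d2 a2 h q x1 L : ℝ) (w : ℝ → ℝ) : Prop :=
  ContDiff ℝ 2 w ∧
  (∀ x ∈ Set.Icc x1 L,
      d2 * deriv (deriv w) x - a2 * deriv w x + h - q * w x = 0) ∧
  d2 * deriv w x1 - a2 * w x1 = 0 ∧ deriv w L = 0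

/-- If `deriv f x0 < 0` and `deriv f` is continuous, then `f` is strictly
antitone on a small interval to the right of `x0`. -/
lemma aux_right (f : ℝ → ℝ) (hfd : Differentiable ℝ f)
    (hf' : Continuous (deriv f)) {x0 L : ℝ} (hx0L : x0 < L)
    (hneg : deriv f x0 < 0) :
    ∃ b ∈ Set.Ioc x0 L, StrictAntiOn f (Set.Icc x0 b) := by
  have hopen : IsOpen {x | deriv f x < 0} := isOpen_lt hf' continuous_const
  obtain ⟨δ, hδ, hball⟩ := Metric.isOpen_iff.mp hopen x0 hneg
  refine ⟨min (x0 + δ/2) L, ⟨lt_min (by linarith) hx0L, min_le_right _ _⟩, ?_⟩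
  apply strictAntiOn_of_deriv_neg (convex_Icc _ _) hfd.continuous.continuousOn
  intro x hx
  rw [interior_Icc] at hx
  apply hball
  rw [Metric.mem_ball, Real.dist_eq, abs_lt]
  have h1 := hx.1
  have h2 : x < x0 + δ/2 := lt_of_lt_of_le hx.2 (min_le_left _ _)
  constructor <;> linarith

/-- If `deriv f x0 < 0` and `deriv f` is continuous, then `f` is strictly
antitone on a small interval to the left of `x0`. -/
lemma aux_left (f : ℝ → ℝ) (hfd : Differentiable ℝ f)
    (hf' : Continuous (deriv f)) {x0 x1 : ℝ} (hx0L : x1 < x0)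
    (hneg : deriv f x0 < 0) :
    ∃ a ∈ Set.Ico x1 x0, StrictAntiOn f (Set.Icc a x0) := by
  have hopen : IsOpen {x | deriv f x < 0} := isOpen_lt hf' continuous_const
  obtain ⟨δ, hδ, hball⟩ := Metric.isOpen_iff.mp hopen x0 hneg
  refine ⟨max (x0 - δ/2) x1, ⟨le_max_right _ _, max_lt (by linarith) hx0L⟩, ?_⟩
  apply strictAntiOn_of_deriv_neg (convex_Icc _ _) hfd.continuous.continuousOn
  intro x hx
  rw [interior_Icc] at hx
  apply hball
  rw [Metric.mem_ball, Real.dist_eq, abs_lt]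
  have h1 : x0 - δ/2 < x := lt_of_le_of_lt (le_max_left _ _) hx.1
  have h2 := hx.2
  constructor <;> linarith

/-- any solution of the upstream toxicant boundary value problem
is positive on `[x1, L]`. -/
theorem upstream_positive
    (d2 a2 h q x1 L : ℝ) (w : ℝ → ℝ)
    (hd2 : 0 < d2) (ha2 : 0 < a2) (hh : 0 < h) (hq : 0 < q)
    (hx1 : 0 ≤ x1) (hx1L : x1 < L)
    (hw : IsUpstreamSolution d2 a2 h q x1 L w) :
    ∀ x ∈ Set.Icc x1 L, 0 < w x := by
  obtain ⟨hC2, hode, hbc1, hbc2⟩ := hw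
  have hC2' : ContDiff ℝ ((1:ℕ)+1) w := by exact_mod_cast hC2
  have hdw : Differentiable ℝ w := (contDiff_succ_iff_deriv.mp hC2').1
  have hC1 : ContDiff ℝ 1 (deriv w) := (contDiff_succ_iff_deriv.mp hC2').2.2
  have hC1' : ContDiff ℝ ((0:ℕ)+1) (deriv w) := by exact_mod_cast hC1
  have hd'w : Differentiable ℝ (deriv w) := (contDiff_succ_iff_deriv.mp hC1').1
  have hcw' : Continuous (deriv w) := hd'w.continuous
  have hcw'' : Continuous (deriv (deriv w)) :=
    (contDiff_succ_iff_deriv.mp hC1').2.2.continuous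
  by_contra hcon
  push_neg at hcon
  obtain ⟨z, hz, hz0⟩ := hcon
  obtain ⟨x0, hx0, hmin⟩ := isCompact_Icc.exists_isMinOn
    (Set.nonempty_Icc.mpr hx1L.le) hdw.continuous.continuousOn
  have hwx0 : w x0 ≤ 0 := le_trans (hmin hz) hz0
  -- key: if the derivative vanishes at the minimizer, we get a contradiction
  have key : deriv w x0 = 0 → False := by
    intro hder
    have hode0 := hode x0 hx0
    have h2 : deriv (deriv w) x0 < 0 := by nlinarith
    rcases lt_or_eq_of_le hx0.2 with hL | hL
    · -- x0 < L : w has a strict local max from the right, contradiction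
      obtain ⟨b, hb, hanti⟩ := aux_right (deriv w) hd'w hcw'' hL h2
      have hwneg : ∀ x ∈ Set.Ioo x0 b, deriv w x < 0 := by
        intro x hx
        have := hanti (Set.left_mem_Icc.mpr hb.1.le) ⟨hx.1.le, hx.2.le⟩ hx.1
        rw [hder] at this; exact this
      have hanti2 : StrictAntiOn w (Set.Icc x0 b) :=
        strictAntiOn_of_deriv_neg (convex_Icc _ _) hdw.continuous.continuousOn
          (by rw [interior_Icc]; exact hwneg)
      have hlt : w b < w x0 :=
        hanti2 (Set.left_mem_Icc.mpr hb.1.le) (Set.right_mem_Icc.mpr hb.1.le) hb.1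
      have hbmem : b ∈ Set.Icc x1 L := ⟨le_trans hx0.1 hb.1.le, hb.2⟩
      exact absurd (hmin hbmem) (not_le.mpr hlt)
    · -- x0 = L : so x1 < x0, strict local max from the left
      have hx1x0 : x1 < x0 := hL ▸ hx1L
      obtain ⟨a, ha, hanti⟩ := aux_left (deriv w) hd'w hcw'' hx1x0 h2
      have hwpos : ∀ x ∈ Set.Ioo a x0, 0 < deriv w x := by
        intro x hx
        have := hanti ⟨hx.1.le, hx.2.le⟩ (Set.right_mem_Icc.mpr ha.2.le) hx.2
        rw [hder] at this; exact this
      have hmono : StrictMonoOn w (Set.Icc a x0) :=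
        strictMonoOn_of_deriv_pos (convex_Icc _ _) hdw.continuous.continuousOn
          (by rw [interior_Icc]; exact hwpos)
      have hlt : w a < w x0 :=
        hmono (Set.left_mem_Icc.mpr ha.2.le) (Set.right_mem_Icc.mpr ha.2.le) ha.2
      have hamem : a ∈ Set.Icc x1 L := ⟨ha.1, le_trans ha.2.le hx0.2⟩
      exact absurd (hmin hamem) (not_le.mpr hlt)
  rcases eq_or_lt_of_le hx0.1 with h1 | h1
  · -- x0 = x1 : use the Robin boundary condition
    subst h1
    have hderle : deriv w x1 ≤ 0 := by nlinarith
    rcases lt_or_eq_of_le hderle with hne | he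
    · -- deriv w x1 < 0 : w decreases to the right, contradicting minimality
      obtain ⟨b, hb, hanti⟩ := aux_right w hdw hcw' hx1L hne
      have hlt : w b < w x1 :=
        hanti (Set.left_mem_Icc.mpr hb.1.le) (Set.right_mem_Icc.mpr hb.1.le) hb.1
      have hbmem : b ∈ Set.Icc x1 L := ⟨hb.1.le, hb.2⟩
      exact absurd (hmin hbmem) (not_le.mpr hlt)
    · exact key he
  · rcases lt_or_eq_of_le hx0.2 with h2 | h2
    · -- interior minimum
      have hloc : IsLocalMin w x0 := hmin.isLocalMin (Icc_mem_nhds h1 h2)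
      exact key hloc.deriv_eq_zero
    · exact key (h2 ▸ hbc2)
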